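/- Let B be a symmetric positive definite n×n real matrix, g_1,…,g_m ∈ ℝ^n, α_1,…,α_m > 0, and let d* be the unique minimizer over ℝ^n of φ(d) = max_{i∈{1,…,m}} ⟨g_i, d⟩/α_i + (1/2)‖d‖_B². Then φ(d*) = −(1/2)‖d*‖_B², and consequently ⟨g_i, d*⟩ ≤ −α_i‖d*‖_B² for every i ∈ {1,…,m}. -/

import Mathlib

/-!
Along the ray `t ↦ t • d*` (`t ≥ 0`) the max-term scales linearly and the quadratic term
quadratically, so `φ (t • d*) = t M + t² Q / 2` with `M = max_i ⟨g_i, d*⟩ / α_i` and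
`Q = ‖d*‖_B²`. This one-variable function is minimized at the interior point `t = 1`, so by
Fermat's theorem its derivative `M + Q` vanishes there. Hence `φ(d*) = M + Q / 2 = -Q / 2`,
and each `⟨g_i, d*⟩ / α_i ≤ M = -Q`.
-/

open scoped RealInnerProductSpace

/-- Maximum of a function over the (nonempty) finite index type `Fin m`. -/
noncomputable def fmax {m : ℕ} [NeZero m] (f : Fin m → ℝ) : ℝ :=
  Finset.univ.sup' Finset.univ_nonempty f

section fmax

variable {m : ℕ} [NeZero m]

lemma le_fmax (f : Fin m → ℝ) (i : Fin m) : f i ≤ fmax f :=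
  Finset.le_sup' f (Finset.mem_univ i)

lemma fmax_const_mul (f : Fin m → ℝ) {t : ℝ} (ht : 0 ≤ t) :
    fmax (fun i => t * f i) = t * fmax f :=
  (Finset.mul₀_sup' ht f _ _).symm

end fmax

lemma add_two_mul_eq_zero_of_forall_le {a b : ℝ}
    (h : ∀ t : ℝ, 0 ≤ t → a + b ≤ t * a + t ^ 2 * b) : a + 2 * b = 0 := by
  have hmin : IsLocalMin (fun t : ℝ => t * a + t ^ 2 * b) 1 := by
    filter_upwards [Ioi_mem_nhds one_pos] with t ht
    simpa using h t (le_of_lt ht)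
  have hderiv : HasDerivAt (fun t : ℝ => t * a + t ^ 2 * b) (a + 2 * b) 1 :=
    (((hasDerivAt_id' 1).mul_const a).fun_add ((hasDerivAt_pow 2 1).mul_const b)).congr_deriv
      (by norm_num)
  exact hmin.hasDerivAt_eq_zero hderiv

theorem add_two_mul_eq_zero_of_isMin_add {E : Type*} [AddCommGroup E] [Module ℝ E]
    {p q : E → ℝ} (hp : ∀ t : ℝ, 0 ≤ t → ∀ x, p (t • x) = t * p x)
    (hq : ∀ (t : ℝ) x, q (t • x) = t ^ 2 * q x) {x : E} (hx : ∀ y, p x + q x ≤ p y + q y) :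
    p x + 2 * q x = 0 :=
  add_two_mul_eq_zero_of_forall_le fun t ht => by
    simpa only [hp t ht, hq] using hx (t • x)

theorem stmt10_general {n m : ℕ} [NeZero m]
    (B : EuclideanSpace ℝ (Fin n) →ₗ[ℝ] EuclideanSpace ℝ (Fin n))
    (g : Fin m → EuclideanSpace ℝ (Fin n)) (α : Fin m → ℝ) (hα : ∀ i, 0 < α i)
    (dStar : EuclideanSpace ℝ (Fin n))
    (hmin : ∀ d : EuclideanSpace ℝ (Fin n),
      (fmax fun i => ⟪g i, dStar⟫ / α i) + ⟪dStar, B dStar⟫ / 2 ≤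
        (fmax fun i => ⟪g i, d⟫ / α i) + ⟪d, B d⟫ / 2) :
    (fmax fun i => ⟪g i, dStar⟫ / α i) + ⟪dStar, B dStar⟫ / 2 =
        -(⟪dStar, B dStar⟫ / 2) ∧
      ∀ i, ⟪g i, dStar⟫ ≤ -(α i * ⟪dStar, B dStar⟫) := by
  have hmax_homog : ∀ t : ℝ, 0 ≤ t → ∀ d : EuclideanSpace ℝ (Fin n),
      (fmax fun i => ⟪g i, t • d⟫ / α i) = t * fmax fun i => ⟪g i, d⟫ / α i := by
    intro t ht d
    simp only [real_inner_smul_right, mul_div_assoc, fmax_const_mul _ ht]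
  have hquad_homog : ∀ (t : ℝ) (d : EuclideanSpace ℝ (Fin n)),
      ⟪t • d, B (t • d)⟫ / 2 = t ^ 2 * (⟪d, B d⟫ / 2) := by
    intro t d
    rw [map_smul, real_inner_smul_left, real_inner_smul_right]
    ring
  have hstat := add_two_mul_eq_zero_of_isMin_add (p := fun d => fmax fun i => ⟪g i, d⟫ / α i)
    (q := fun d => ⟪d, B d⟫ / 2) hmax_homog hquad_homog hmin
  have hM : (fmax fun i => ⟪g i, dStar⟫ / α i) = -⟪dStar, B dStar⟫ := by linarith
  refine ⟨by rw [hM]; ring, fun i => ?_⟩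
  have hi := le_fmax (fun j => ⟪g j, dStar⟫ / α j) i
  rw [hM, div_le_iff₀ (hα i)] at hi
  linarith

/-- If `d*` is the unique minimizer of
`φ(d) = max_i ⟨g i, d⟩/α_i + ‖d‖_B²/2`, then `φ(d*) = −‖d*‖_B²/2`, and consequently
`⟨g i, d*⟩ ≤ −α_i ‖d*‖_B²` for every `i`. -/
theorem stmt10 {n m : ℕ} [NeZero m]
    (B : EuclideanSpace ℝ (Fin n) →ₗ[ℝ] EuclideanSpace ℝ (Fin n))
    (hsym : ∀ x y : EuclideanSpace ℝ (Fin n), ⟪B x, y⟫ = ⟪x, B y⟫)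
    (hposdef : ∀ x : EuclideanSpace ℝ (Fin n), x ≠ 0 → 0 < ⟪x, B x⟫)
    (g : Fin m → EuclideanSpace ℝ (Fin n)) (α : Fin m → ℝ) (hα : ∀ i, 0 < α i)
    (dStar : EuclideanSpace ℝ (Fin n))
    (hmin : ∀ d : EuclideanSpace ℝ (Fin n),
      (fmax fun i => ⟪g i, dStar⟫ / α i) + ⟪dStar, B dStar⟫ / 2 ≤
        (fmax fun i => ⟪g i, d⟫ / α i) + ⟪d, B d⟫ / 2) :
    (fmax fun i => ⟪g i, dStar⟫ / α i) + ⟪dStar, B dStar⟫ / 2 =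
        -(⟪dStar, B dStar⟫ / 2) ∧
      ∀ i, ⟪g i, dStar⟫ ≤ -(α i * ⟪dStar, B dStar⟫) :=
  stmt10_general B g α hα dStar hmin
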